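/- Consider the dyadic decomposition used in the Hardy inequality: let G be a finite tree rooted at o, g : E → ℝ nonnegative, and for i ∈ ℤ let B_i = {v : 2^i ≤ ∑_{e∈ℓ(v)} g(e) < 2^{i+1}}. Define g_i(e) = 2^{−i+1} g(e) 𝟙{e₊ ∈ B_{i−1} ∪ B_i}. Then for every v ∈ B_i: ∑_{e∈ℓ(v)} g_i(e) ≥ 1. Consequently ν_{B_i} ≤ 2^{−2i+2} ∑_{e : e₊ ∈ B_{i−1}∪B_i} g(e)². -/

import Mathlib

/-!
Write `S(v) = ∑_{e ∈ ℓ(v)} g(e)`. In a tree the far endpoints of the edges of `ℓ(v)` form a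
chain ordered by distance to `o`, and `S` is monotone along it. For `v ∈ B_i`, let `m` be the
last endpoint on `ℓ(v)` outside `B_{i-1} ∪ B_i`: all the other such edges lie on `ℓ(m)`, and
`S(m) ≤ S(v) < 2^{i+1}` together with `m ∉ B_{i-1} ∪ B_i` forces `S(m) < 2^{i-1}`. So the edges
with endpoint in `B_{i-1} ∪ B_i` carry at least `2^i - 2^{i-1} = 2^{i-1}` of `S(v)`, i.e. `g_i`
is admissible for `ν_{B_i}`, and its energy is the stated bound.
-/

open Finset

/-- Edges on the path from `o` to `v` in a tree, encoded by their endpoints farther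
from `o`: the vertices `u ≠ o` lying on the path from `o` to `v`. -/
noncomputable def pathE {V : Type*} [Fintype V] [DecidableEq V] (G : SimpleGraph V) (o v : V) :
    Finset V :=
  Finset.univ.filter fun u => u ≠ o ∧ G.dist o u + G.dist u v = G.dist o v

/-- `ν_B`: the infimum of `∑_e f(e)²` over `f : E → ℝ` with `∑_{e ∈ ℓ(v)} f(e) ≥ 1`
for every `v ∈ B` (edges encoded by their far endpoints). -/
noncomputable def nuB {V : Type*} [Fintype V] [DecidableEq V] (G : SimpleGraph V)
    (o : V) (B : Finset V) : ℝ :=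
  sInf {r : ℝ | ∃ f : V → ℝ, (∀ v ∈ B, 1 ≤ ∑ u ∈ pathE G o v, f u) ∧
    r = ∑ u ∈ Finset.univ.filter fun u => u ≠ o, (f u) ^ 2}

open Classical in
/-- The dyadic level set `B_i = {v : 2^i ≤ ∑_{e ∈ ℓ(v)} g(e) < 2^{i+1}}`. -/
noncomputable def Bset {V : Type*} [Fintype V] [DecidableEq V] (G : SimpleGraph V)
    (o : V) (g : V → ℝ) (i : ℤ) : Finset V :=
  Finset.univ.filter fun v =>
    (2 : ℝ) ^ i ≤ ∑ u ∈ pathE G o v, g u ∧ (∑ u ∈ pathE G o v, g u) < (2 : ℝ) ^ (i + 1)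

namespace SimpleGraph

variable {V : Type*} {G : SimpleGraph V} {o u v w : V}

theorem Walk.dist_add_dist_of_mem_support {p : G.Walk u v} (hp : p.length = G.dist u v)
    (hw : w ∈ p.support) : G.dist u w + G.dist w v = G.dist u v := by
  classical
  rw [← hp, ← length_eq_dist_of_subwalk hp (p.isSubwalk_takeUntil hw),
    ← length_eq_dist_of_subwalk hp (p.isSubwalk_dropUntil hw), ← Walk.length_append,
    p.take_spec hw]

/-- Glueing shortest walks through `w` gives a shortest walk, hence a path, hence `p`. -/
theorem IsTree.mem_support_of_dist_add_dist_eq (hG : G.IsTree) {p : G.Walk u v} (hp : p.IsPath)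
    (h : G.dist u w + G.dist w v = G.dist u v) : w ∈ p.support := by
  obtain ⟨q₁, hq₁⟩ := hG.connected.exists_walk_length_eq_dist u w
  obtain ⟨q₂, hq₂⟩ := hG.connected.exists_walk_length_eq_dist w v
  have hq : (q₁.append q₂).IsPath :=
    Walk.isPath_of_length_eq_dist _ (by rw [Walk.length_append, hq₁, hq₂, h])
  have : q₁.append q₂ = p :=
    congrArg Subtype.val ((hG.isAcyclic.subsingleton_path u v).elim ⟨_, hq⟩ ⟨p, hp⟩)
  rw [← this, Walk.mem_support_append_iff]
  exact Or.inl q₁.end_mem_support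

theorem IsTree.dist_add_dist_eq_of_dist_le (hG : G.IsTree)
    (hu : G.dist o u + G.dist u v = G.dist o v) (hw : G.dist o w + G.dist w v = G.dist o v)
    (hle : G.dist o u ≤ G.dist o w) : G.dist o u + G.dist u w = G.dist o w := by
  classical
  obtain ⟨p, hp, hlen⟩ := hG.connected.exists_path_of_dist o v
  have hwp := hG.mem_support_of_dist_add_dist_eq hp hw
  have hup := hG.mem_support_of_dist_add_dist_eq hp hu
  rw [← p.take_spec hwp, Walk.mem_support_append_iff] at hup
  rcases hup with hup | hup
  · exact Walk.dist_add_dist_of_mem_support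
      (length_eq_dist_of_subwalk hlen (p.isSubwalk_takeUntil hwp)) hup
  · have hwuv := Walk.dist_add_dist_of_mem_support
      (length_eq_dist_of_subwalk hlen (p.isSubwalk_dropUntil hwp)) hup
    have hwu : G.dist w u = 0 := by omega
    obtain rfl := hG.connected.dist_eq_zero_iff.1 hwu
    simp

end SimpleGraph

section PathE

variable {V : Type*} [Fintype V] [DecidableEq V] {G : SimpleGraph V} {o u v w : V}

theorem pathE_subset_pathE (hG : G.Connected) (hu : u ∈ pathE G o v) :
    pathE G o u ⊆ pathE G o v := by
  intro x hx
  simp only [pathE, mem_filter, mem_univ, true_and] at hu hx ⊢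
  refine ⟨hx.1, ?_⟩
  have := hG.dist_triangle (u := x) (v := u) (w := v)
  have := hG.dist_triangle (u := o) (v := x) (w := v)
  omega

theorem mem_pathE_of_dist_le (hG : G.IsTree) (hu : u ∈ pathE G o v) (hw : w ∈ pathE G o v)
    (hle : G.dist o u ≤ G.dist o w) : u ∈ pathE G o w := by
  simp only [pathE, mem_filter, mem_univ, true_and] at hu hw ⊢
  exact ⟨hu.1, hG.dist_add_dist_eq_of_dist_le hu.2 hw.2 hle⟩

theorem exists_mem_subset_pathE (hG : G.IsTree) {T : Finset V} (hT : T ⊆ pathE G o v)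
    (hne : T.Nonempty) : ∃ m ∈ T, T ⊆ pathE G o m := by
  obtain ⟨m, hm, hmax⟩ := T.exists_max_image (G.dist o) hne
  exact ⟨m, hm, fun t ht => mem_pathE_of_dist_le hG (hT ht) (hT hm) (hmax t ht)⟩

theorem sum_pathE_le_sum_pathE (hG : G.Connected) {g : V → ℝ} (hg : ∀ u, 0 ≤ g u)
    (hu : u ∈ pathE G o v) : ∑ x ∈ pathE G o u, g x ≤ ∑ x ∈ pathE G o v, g x :=
  sum_le_sum_of_subset_of_nonneg (pathE_subset_pathE hG hu) fun x _ _ => hg x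

theorem nuB_le {B : Finset V} {f : V → ℝ} (hf : ∀ v ∈ B, 1 ≤ ∑ u ∈ pathE G o v, f u) :
    nuB G o B ≤ ∑ u ∈ univ.filter fun u => u ≠ o, f u ^ 2 :=
  csInf_le ⟨0, by rintro r ⟨f, -, rfl⟩; positivity⟩ ⟨f, hf, rfl⟩

end PathE

section Dyadic

variable {V : Type*} [Fintype V] [DecidableEq V] {G : SimpleGraph V} {o m v : V} {g : V → ℝ}
  {i : ℤ}

theorem sum_pathE_lt_of_notMem_Bset (h : ∑ u ∈ pathE G o m, g u < (2 : ℝ) ^ (i + 1))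
    (hm : m ∉ Bset G o g (i - 1) ∪ Bset G o g i) :
    ∑ u ∈ pathE G o m, g u < (2 : ℝ) ^ (i - 1) := by
  simp only [Bset, mem_union, mem_filter, mem_univ, true_and, sub_add_cancel, not_or,
    not_and, not_lt] at hm
  by_contra! h'
  exact h.not_ge (hm.2 (hm.1 h'))

theorem sum_pathE_filter_notMem_le (hG : G.IsTree) (hg : ∀ u, 0 ≤ g u)
    (hv : v ∈ Bset G o g i) :
    ∑ u ∈ (pathE G o v).filter (· ∉ Bset G o g (i - 1) ∪ Bset G o g i), g u ≤
      (2 : ℝ) ^ (i - 1) := by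
  set T := (pathE G o v).filter (· ∉ Bset G o g (i - 1) ∪ Bset G o g i)
  rcases T.eq_empty_or_nonempty with hT | hT
  · rw [hT, sum_empty]
    positivity
  obtain ⟨m, hmT, hTm⟩ := exists_mem_subset_pathE hG (filter_subset _ _) hT
  have hmv : m ∈ pathE G o v := (mem_filter.1 hmT).1
  have hv' := (mem_filter.1 hv).2.2
  calc ∑ u ∈ T, g u ≤ ∑ u ∈ pathE G o m, g u :=
        sum_le_sum_of_subset_of_nonneg hTm fun u _ _ => hg u
    _ ≤ (2 : ℝ) ^ (i - 1) :=
        (sum_pathE_lt_of_notMem_Bset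
          ((sum_pathE_le_sum_pathE hG.connected hg hmv).trans_lt hv') (mem_filter.1 hmT).2).le

theorem zpow_sub_one_le_sum_pathE_filter_mem (hG : G.IsTree) (hg : ∀ u, 0 ≤ g u)
    (hv : v ∈ Bset G o g i) :
    (2 : ℝ) ^ (i - 1) ≤
      ∑ u ∈ (pathE G o v).filter (· ∈ Bset G o g (i - 1) ∪ Bset G o g i), g u := by
  have hsplit := sum_filter_add_sum_filter_not (pathE G o v)
    (· ∈ Bset G o g (i - 1) ∪ Bset G o g i) g
  have hbad := sum_pathE_filter_notMem_le hG hg hv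
  have hv' := (mem_filter.1 hv).2.1
  have h2 : (2 : ℝ) ^ i = 2 ^ (i - 1) * 2 := by
    rw [← zpow_add_one₀ two_ne_zero, sub_add_cancel]
  linarith

end Dyadic

/-- Dyadic decomposition step of the Hardy inequality: for nonnegative `g` and
`g_i(e) = 2^{-i+1} g(e) 𝟙{e₊ ∈ B_{i-1} ∪ B_i}`, every `v ∈ B_i` satisfies
`∑_{e ∈ ℓ(v)} g_i(e) ≥ 1`; consequently
`ν_{B_i} ≤ 2^{-2i+2} ∑_{e : e₊ ∈ B_{i-1} ∪ B_i} g(e)²`. -/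
theorem dyadic_decomposition_step {V : Type*} [Fintype V] [DecidableEq V]
    (G : SimpleGraph V) (hG : G.IsTree) (o : V) (g : V → ℝ)
    (hg : ∀ u, 0 ≤ g u) (i : ℤ) :
    (∀ v ∈ Bset G o g i, 1 ≤ ∑ u ∈ pathE G o v,
        (if u ∈ Bset G o g (i - 1) ∪ Bset G o g i then (2 : ℝ) ^ (-i + 1) * g u else 0)) ∧
    nuB G o (Bset G o g i) ≤ (2 : ℝ) ^ (-2 * i + 2) *
      ∑ u ∈ (Finset.univ.filter fun u => u ≠ o) ∩
          (Bset G o g (i - 1) ∪ Bset G o g i), (g u) ^ 2 := by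
  set B := Bset G o g (i - 1) ∪ Bset G o g i
  have hfeasible : ∀ v ∈ Bset G o g i,
      1 ≤ ∑ u ∈ pathE G o v, (if u ∈ B then (2 : ℝ) ^ (-i + 1) * g u else 0) := by
    intro v hv
    rw [← sum_filter, ← mul_sum]
    calc (1 : ℝ) = 2 ^ (-i + 1) * 2 ^ (i - 1) := by rw [← zpow_add₀ two_ne_zero]; norm_num
      _ ≤ _ := mul_le_mul_of_nonneg_left
          (zpow_sub_one_le_sum_pathE_filter_mem hG hg hv) (by positivity)
  refine ⟨hfeasible, (nuB_le hfeasible).trans_eq ?_⟩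
  rw [← filter_mem_eq_inter, sum_filter (p := (· ∈ B)), mul_sum]
  refine sum_congr rfl fun u _ => ?_
  split_ifs
  · rw [mul_pow, ← zpow_natCast, ← zpow_mul]
    ring_nf
  · simp
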